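/- Let (V₀, ω₀), (V₁, ω₁), (V₂, ω₂) be symplectic vector spaces, Λ₀₁ ⊆ V₀ × V₁ a Lagrangian subspace for (−ω₀) ⊕ ω₁, and Λ₁₂ ⊆ V₁ × V₂ a Lagrangian subspace for (−ω₁) ⊕ ω₂. Then the kernel of the projection π₀₂ restricted to the fiber product Λ₀₁ ×_{V₁} Λ₁₂ equals {(0, v₁, v₁, 0) : v₁ ∈ P₀₁^{ω₁} ∩ P₁₂^{ω₁}}, where P₀₁ ⊆ V₁ is the projection of Λ₀₁ to its second factor, P₁₂ ⊆ V₁ is the projection of Λ₁₂ to its first factor, and (·)^{ω₁} denotes the ω₁-symplectic complement in V₁. -/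

import Mathlib

open LinearMap Submodule

/-- The symplectic complement of a subspace `W` with respect to a bilinear form `ω`. -/
def symplComp {V : Type*} [AddCommGroup V] [Module ℝ V]
    (ω : V →ₗ[ℝ] V →ₗ[ℝ] ℝ) (W : Submodule ℝ V) : Submodule ℝ V where
  carrier := {v | ∀ w ∈ W, ω v w = 0}
  zero_mem' := by intro w _; simp
  add_mem' := by intro a b ha hb w hw; simp [ha w hw, hb w hw]
  smul_mem' := by intro c a ha w hw; simp [ha w hw]

/-- `ω` is a (linear) symplectic form: alternating and nondegenerate. -/
structure IsSymplecticForm {V : Type*} [AddCommGroup V] [Module ℝ V]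
    (ω : V →ₗ[ℝ] V →ₗ[ℝ] ℝ) : Prop where
  alternating : ∀ v, ω v v = 0
  nondeg : ∀ v, (∀ w, ω v w = 0) → v = 0

/-- A subspace is Lagrangian iff it equals its symplectic complement. -/
def IsLagrangian {V : Type*} [AddCommGroup V] [Module ℝ V]
    (ω : V →ₗ[ℝ] V →ₗ[ℝ] ℝ) (Λ : Submodule ℝ V) : Prop :=
  Λ = symplComp ω Λ

/-- The symplectic form `(−ω₀) ⊕ ω₁` on `V₀ × V₁`. -/
def prodFormNegPos {V₀ V₁ : Type*} [AddCommGroup V₀] [Module ℝ V₀]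
    [AddCommGroup V₁] [Module ℝ V₁]
    (ω₀ : V₀ →ₗ[ℝ] V₀ →ₗ[ℝ] ℝ) (ω₁ : V₁ →ₗ[ℝ] V₁ →ₗ[ℝ] ℝ) :
    (V₀ × V₁) →ₗ[ℝ] (V₀ × V₁) →ₗ[ℝ] ℝ :=
  LinearMap.mk₂ ℝ (fun x y => - ω₀ x.1 y.1 + ω₁ x.2 y.2)
    (by intro x x' y
        simp only [Prod.fst_add, Prod.snd_add, map_add, LinearMap.add_apply]; ring)
    (by intro c x y
        simp only [Prod.smul_fst, Prod.smul_snd, map_smul, LinearMap.smul_apply,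
          smul_eq_mul]; ring)
    (by intro x y y'
        simp only [Prod.fst_add, Prod.snd_add, map_add, LinearMap.add_apply]; ring)
    (by intro c x y
        simp only [Prod.smul_fst, Prod.smul_snd, map_smul, LinearMap.smul_apply,
          smul_eq_mul]; ring)

/-- The symplectic form `ω₀₁₁₂ = (−ω₀) ⊕ ω₁ ⊕ (−ω₁) ⊕ ω₂` on `(V₀ × V₁) × (V₁ × V₂)`. -/
def form0112 {V₀ V₁ V₂ : Type*} [AddCommGroup V₀] [Module ℝ V₀]
    [AddCommGroup V₁] [Module ℝ V₁] [AddCommGroup V₂] [Module ℝ V₂]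
    (ω₀ : V₀ →ₗ[ℝ] V₀ →ₗ[ℝ] ℝ) (ω₁ : V₁ →ₗ[ℝ] V₁ →ₗ[ℝ] ℝ)
    (ω₂ : V₂ →ₗ[ℝ] V₂ →ₗ[ℝ] ℝ) :
    ((V₀ × V₁) × (V₁ × V₂)) →ₗ[ℝ] ((V₀ × V₁) × (V₁ × V₂)) →ₗ[ℝ] ℝ :=
  LinearMap.mk₂ ℝ
    (fun x y => - ω₀ x.1.1 y.1.1 + ω₁ x.1.2 y.1.2 - ω₁ x.2.1 y.2.1 + ω₂ x.2.2 y.2.2)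
    (by intro x x' y
        simp only [Prod.fst_add, Prod.snd_add, map_add, LinearMap.add_apply]; ring)
    (by intro c x y
        simp only [Prod.smul_fst, Prod.smul_snd, map_smul, LinearMap.smul_apply,
          smul_eq_mul]; ring)
    (by intro x y y'
        simp only [Prod.fst_add, Prod.snd_add, map_add, LinearMap.add_apply]; ring)
    (by intro c x y
        simp only [Prod.smul_fst, Prod.smul_snd, map_smul, LinearMap.smul_apply,
          smul_eq_mul]; ring)

/-- `K = V₀ × Δ₁ × V₂`, the product of the full spaces with the diagonal of `V₁`. -/
def Kdiag {V₀ V₁ V₂ : Type*} [AddCommGroup V₀] [Module ℝ V₀]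
    [AddCommGroup V₁] [Module ℝ V₁] [AddCommGroup V₂] [Module ℝ V₂] :
    Submodule ℝ ((V₀ × V₁) × (V₁ × V₂)) where
  carrier := {x | x.1.2 = x.2.1}
  zero_mem' := rfl
  add_mem' := by
    intro a b ha hb
    simp only [Set.mem_setOf_eq] at ha hb ⊢
    show a.1.2 + b.1.2 = a.2.1 + b.2.1
    rw [ha, hb]
  smul_mem' := by
    intro c a ha
    simp only [Set.mem_setOf_eq] at ha ⊢
    show c • a.1.2 = c • a.2.1
    rw [ha]

/-- The projection `π₀₂ : V₀ × V₁ × V₁ × V₂ → V₀ × V₂` onto the outer factors. -/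
def proj02 {V₀ V₁ V₂ : Type*} [AddCommGroup V₀] [Module ℝ V₀]
    [AddCommGroup V₁] [Module ℝ V₁] [AddCommGroup V₂] [Module ℝ V₂] :
    ((V₀ × V₁) × (V₁ × V₂)) →ₗ[ℝ] V₀ × V₂ where
  toFun x := (x.1.1, x.2.2)
  map_add' _ _ := rfl
  map_smul' _ _ := rfl


/-! The kernel of `π₀₂` on the fiber product consists of the `(0, v, v, 0)` with `(0, v) ∈ Λ₀₁` and
`(v, 0) ∈ Λ₁₂`. Since `Λ₀₁ = Λ₀₁^ω`, the first condition says that `(0, v)` is `(−ω₀) ⊕ ω₁`-orthogonal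
to `Λ₀₁`, i.e. that `v` is `ω₁`-orthogonal to `P₀₁`; likewise `(v, 0) ∈ Λ₁₂` iff `v ∈ P₁₂^{ω₁}`. -/

lemma mem_symplComp {V : Type*} [AddCommGroup V] [Module ℝ V] {ω : V →ₗ[ℝ] V →ₗ[ℝ] ℝ}
    {W : Submodule ℝ V} {v : V} : v ∈ symplComp ω W ↔ ∀ w ∈ W, ω v w = 0 := Iff.rfl

section ProdForm

variable {V₀ V₁ : Type*} [AddCommGroup V₀] [Module ℝ V₀] [AddCommGroup V₁] [Module ℝ V₁]
  {ω₀ : V₀ →ₗ[ℝ] V₀ →ₗ[ℝ] ℝ} {ω₁ : V₁ →ₗ[ℝ] V₁ →ₗ[ℝ] ℝ}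

@[simp]
lemma prodFormNegPos_apply (x y : V₀ × V₁) :
    prodFormNegPos ω₀ ω₁ x y = -ω₀ x.1 y.1 + ω₁ x.2 y.2 := rfl

lemma comap_inr_symplComp_prodFormNegPos (W : Submodule ℝ (V₀ × V₁)) :
    (symplComp (prodFormNegPos ω₀ ω₁) W).comap (inr ℝ V₀ V₁) =
      symplComp ω₁ (W.map (snd ℝ V₀ V₁)) := by
  ext v
  simp [mem_symplComp, forall_comm (α := V₀)]

lemma comap_inl_symplComp_prodFormNegPos (W : Submodule ℝ (V₀ × V₁)) :
    (symplComp (prodFormNegPos ω₀ ω₁) W).comap (inl ℝ V₀ V₁) =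
      symplComp ω₀ (W.map (fst ℝ V₀ V₁)) := by
  ext v
  simp [mem_symplComp]

lemma IsLagrangian.comap_inr {Λ : Submodule ℝ (V₀ × V₁)}
    (hΛ : IsLagrangian (prodFormNegPos ω₀ ω₁) Λ) :
    Λ.comap (inr ℝ V₀ V₁) = symplComp ω₁ (Λ.map (snd ℝ V₀ V₁)) := by
  conv_lhs => rw [hΛ]
  exact comap_inr_symplComp_prodFormNegPos Λ

lemma IsLagrangian.comap_inl {Λ : Submodule ℝ (V₀ × V₁)}
    (hΛ : IsLagrangian (prodFormNegPos ω₀ ω₁) Λ) :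
    Λ.comap (inl ℝ V₀ V₁) = symplComp ω₀ (Λ.map (fst ℝ V₀ V₁)) := by
  conv_lhs => rw [hΛ]
  exact comap_inl_symplComp_prodFormNegPos Λ

end ProdForm

lemma fiberProduct_inf_ker_proj02 {V₀ V₁ V₂ : Type*} [AddCommGroup V₀] [Module ℝ V₀]
    [AddCommGroup V₁] [Module ℝ V₁] [AddCommGroup V₂] [Module ℝ V₂]
    (Λ₀₁ : Submodule ℝ (V₀ × V₁)) (Λ₁₂ : Submodule ℝ (V₁ × V₂)) :
    (Λ₀₁.prod Λ₁₂ ⊓ Kdiag) ⊓ ker proj02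
      = map ((inr ℝ V₀ V₁).prod (inl ℝ V₁ V₂))
          (Λ₀₁.comap (inr ℝ V₀ V₁) ⊓ Λ₁₂.comap (inl ℝ V₁ V₂)) := by
  ext ⟨⟨x₀, x₁⟩, y₁, x₂⟩
  simp only [mem_inf, mem_prod, mem_ker, mem_map, mem_comap, prod_apply, Function.prod,
    inr_apply, inl_apply, Prod.mk.injEq]
  constructor
  · rintro ⟨⟨⟨h₀₁, h₁₂⟩, rfl : x₁ = y₁⟩, hproj⟩
    obtain ⟨rfl, rfl⟩ : x₀ = 0 ∧ x₂ = 0 := Prod.mk_eq_zero.mp hproj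
    exact ⟨x₁, ⟨h₀₁, h₁₂⟩, ⟨rfl, rfl⟩, rfl, rfl⟩
  · rintro ⟨v, ⟨h₀₁, h₁₂⟩, ⟨rfl, rfl⟩, rfl, rfl⟩
    exact ⟨⟨⟨h₀₁, h₁₂⟩, rfl⟩, rfl⟩

theorem statement2_general {V₀ V₁ V₂ : Type*}
    [AddCommGroup V₀] [Module ℝ V₀]
    [AddCommGroup V₁] [Module ℝ V₁]
    [AddCommGroup V₂] [Module ℝ V₂]
    (ω₀ : V₀ →ₗ[ℝ] V₀ →ₗ[ℝ] ℝ) (ω₁ : V₁ →ₗ[ℝ] V₁ →ₗ[ℝ] ℝ) (ω₂ : V₂ →ₗ[ℝ] V₂ →ₗ[ℝ] ℝ)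
    (Λ₀₁ : Submodule ℝ (V₀ × V₁)) (Λ₁₂ : Submodule ℝ (V₁ × V₂))
    (hΛ₀₁ : IsLagrangian (prodFormNegPos ω₀ ω₁) Λ₀₁)
    (hΛ₁₂ : IsLagrangian (prodFormNegPos ω₁ ω₂) Λ₁₂) :
    (Λ₀₁.prod Λ₁₂ ⊓ Kdiag) ⊓ LinearMap.ker proj02
      = Submodule.map ((LinearMap.inr ℝ V₀ V₁).prod (LinearMap.inl ℝ V₁ V₂))
          (symplComp ω₁ (Submodule.map (LinearMap.snd ℝ V₀ V₁) Λ₀₁)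
            ⊓ symplComp ω₁ (Submodule.map (LinearMap.fst ℝ V₁ V₂) Λ₁₂)) := by
  rw [fiberProduct_inf_ker_proj02, hΛ₀₁.comap_inr, hΛ₁₂.comap_inl]

theorem statement2 {V₀ V₁ V₂ : Type*}
    [AddCommGroup V₀] [Module ℝ V₀] [FiniteDimensional ℝ V₀]
    [AddCommGroup V₁] [Module ℝ V₁] [FiniteDimensional ℝ V₁]
    [AddCommGroup V₂] [Module ℝ V₂] [FiniteDimensional ℝ V₂]
    (ω₀ : V₀ →ₗ[ℝ] V₀ →ₗ[ℝ] ℝ) (ω₁ : V₁ →ₗ[ℝ] V₁ →ₗ[ℝ] ℝ) (ω₂ : V₂ →ₗ[ℝ] V₂ →ₗ[ℝ] ℝ)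
    (hω₀ : IsSymplecticForm ω₀) (hω₁ : IsSymplecticForm ω₁) (hω₂ : IsSymplecticForm ω₂)
    (Λ₀₁ : Submodule ℝ (V₀ × V₁)) (Λ₁₂ : Submodule ℝ (V₁ × V₂))
    (hΛ₀₁ : IsLagrangian (prodFormNegPos ω₀ ω₁) Λ₀₁)
    (hΛ₁₂ : IsLagrangian (prodFormNegPos ω₁ ω₂) Λ₁₂) :
    (Λ₀₁.prod Λ₁₂ ⊓ Kdiag) ⊓ LinearMap.ker proj02
      = Submodule.map ((LinearMap.inr ℝ V₀ V₁).prod (LinearMap.inl ℝ V₁ V₂))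
          (symplComp ω₁ (Submodule.map (LinearMap.snd ℝ V₀ V₁) Λ₀₁)
            ⊓ symplComp ω₁ (Submodule.map (LinearMap.fst ℝ V₁ V₂) Λ₁₂)) :=
  statement2_general ω₀ ω₁ ω₂ Λ₀₁ Λ₁₂ hΛ₀₁ hΛ₁₂
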